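/- Let Ω be the automorphism group of the infinite rooted binary tree and ψ : Ω → ∏_{n≥1} F_2 the product of the level-parity homomorphisms φ_n. If G ≤ Ω is an abelian subgroup containing an element σ with φ_1(σ) = 1, then ψ(G) ⊆ F_2 · ψ(σ), so in particular ψ(G) is an F_2-subspace of dimension at most 1. -/
import Mathlib


/-- A root-preserving automorphism of the infinite rooted binary tree, modeled as a
permutation of finite binary strings (`List Bool`) fixing the root and sending the two
children `s ++ [b]` of a vertex `s` to children of `σ s`. -/
def IsTreeAut (σ : Equiv.Perm (List Bool)) : Prop :=
  σ [] = [] ∧ ∀ (s : List Bool) (b : Bool), ∃ b' : Bool, σ (s ++ [b]) = σ s ++ [b']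

/-- The swap indicator `ε_v(σ) ∈ 𝔽₂` of `σ` at a vertex `v`: `1` if `σ` swaps the two
children of `v`, `0` otherwise. -/
def swapBit (σ : Equiv.Perm (List Bool)) (v : List Bool) : ZMod 2 :=
  if σ (v ++ [false]) = σ v ++ [false] then 0 else 1

/-- The level-`n` parity map `φ_n : Ω → 𝔽₂` (for `n ≥ 1`): the sum of the swap indicators
of `σ` over all `2^(n-1)` vertices at level `n - 1`. -/
def phiLevel (n : ℕ) (σ : Equiv.Perm (List Bool)) : ZMod 2 :=
  ∑ v : Fin (n - 1) → Bool, swapBit σ (List.ofFn v)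

/-- The product map `ψ = (φ_1, φ_2, …) : Ω → ∏_{n ≥ 1} 𝔽₂` (indexed so that entry `n` is
`φ_{n+1}`). -/
def psiMap (σ : Equiv.Perm (List Bool)) : ℕ → ZMod 2 :=
  fun n => phiLevel (n + 1) σ

-- children structure
lemma taut_children {σ : Equiv.Perm (List Bool)} (hσ : IsTreeAut σ) (v : List Bool) :
    (swapBit σ v = 0 ∧ σ (v ++ [false]) = σ v ++ [false] ∧ σ (v ++ [true]) = σ v ++ [true]) ∨
    (swapBit σ v = 1 ∧ σ (v ++ [false]) = σ v ++ [true] ∧ σ (v ++ [true]) = σ v ++ [false]) := by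
  obtain ⟨b0, h0⟩ := hσ.2 v false
  obtain ⟨b1, h1⟩ := hσ.2 v true
  have hne : b0 ≠ b1 := by
    intro h
    subst h
    have : v ++ [false] = v ++ [true] := σ.injective (by rw [h0, h1])
    simp at this
  cases b0 <;> cases b1 <;> simp_all [swapBit]

-- append suffix structure
lemma taut_append {σ : Equiv.Perm (List Bool)} (hσ : IsTreeAut σ) (s t : List Bool) :
    ∃ t' : List Bool, t'.length = t.length ∧ σ (s ++ t) = σ s ++ t' := by
  induction t using List.reverseRecOn with
  | nil => exact ⟨[], rfl, by simp⟩
  | append_singleton t0 b ih =>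
    obtain ⟨t', ht, h⟩ := ih
    obtain ⟨b', hb⟩ := hσ.2 (s ++ t0) b
    exact ⟨t' ++ [b'], by simp [ht], by rw [← List.append_assoc, hb, h, List.append_assoc]⟩

lemma taut_length {σ : Equiv.Perm (List Bool)} (hσ : IsTreeAut σ) (v : List Bool) :
    (σ v).length = v.length := by
  obtain ⟨t', ht, h⟩ := taut_append hσ [] v
  simp only [List.nil_append] at h
  rw [h, hσ.1]
  simpa using ht

-- cocycle
lemma swapBit_mul {π ρ : Equiv.Perm (List Bool)} (hπ : IsTreeAut π) (hρ : IsTreeAut ρ)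
    (v : List Bool) : swapBit (π * ρ) v = swapBit π (ρ v) + swapBit ρ v := by
  have hinj : ∀ (l : List Bool) (b c : Bool), (l ++ [b] = l ++ [c]) ↔ b = c := by
    intro l b c; simp
  rcases taut_children hρ v with ⟨e, hf, _⟩ | ⟨e, hf, _⟩ <;>
    rcases taut_children hπ (ρ v) with ⟨f, gf, gt⟩ | ⟨f, gf, gt⟩ <;>
      simp [swapBit, Equiv.Perm.mul_apply, hf, gf, gt, e, f] at * <;>
      (try simp_all [swapBit]) <;> decide

lemma ofFn_getD {n : ℕ} {l : List Bool} (h : l.length = n) :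
    List.ofFn (fun i : Fin n => l.getD i false) = l := by
  apply List.ext_getElem (by simp [h])
  intro i h1 h2
  simp only [List.getElem_ofFn]
  exact List.getD_eq_getElem l false h2

lemma list_ofFn_inj {n : ℕ} {f g : Fin n → Bool} (h : List.ofFn f = List.ofFn g) : f = g := by
  funext i
  have := congrArg (fun l => l.getD i false) h
  simpa using this

-- reindex a sum over level-n vertices by a tree automorphism
lemma sum_comp_aut {σ : Equiv.Perm (List Bool)} (hσ : IsTreeAut σ) (n : ℕ)
    (f : List Bool → ZMod 2) :
    ∑ v : Fin n → Bool, f (σ (List.ofFn v)) = ∑ v : Fin n → Bool, f (List.ofFn v) := by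
  have hlen : ∀ v : Fin n → Bool, (σ (List.ofFn v)).length = n := by
    intro v; rw [taut_length hσ]; simp
  set F : (Fin n → Bool) → (Fin n → Bool) := fun v i => (σ (List.ofFn v)).getD i false with hFdef
  have hF : ∀ v, List.ofFn (F v) = σ (List.ofFn v) := fun v => ofFn_getD (hlen v)
  have hinj : Function.Injective F := by
    intro v w h
    have h2 : σ (List.ofFn v) = σ (List.ofFn w) := by rw [← hF, ← hF, h]
    exact list_ofFn_inj (σ.injective h2)
  have hbij := Finite.injective_iff_bijective.mp hinj
  calc ∑ v : Fin n → Bool, f (σ (List.ofFn v))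
      = ∑ v : Fin n → Bool, (fun w => f (List.ofFn w)) (F v) := by
        refine Finset.sum_congr rfl fun v _ => ?_
        show f (σ (List.ofFn v)) = f (List.ofFn (F v))
        rw [hF]
    _ = ∑ v : Fin n → Bool, f (List.ofFn v) := hbij.sum_comp fun w => f (List.ofFn w)

-- reindex with a fixed head bit
lemma sum_comp_head {σ : Equiv.Perm (List Bool)} (hσ : IsTreeAut σ) (n : ℕ)
    {b c : Bool} (hb : σ [b] = [c]) (f : List Bool → ZMod 2) :
    ∑ v : Fin n → Bool, f (σ (b :: List.ofFn v)) = ∑ v : Fin n → Bool, f (c :: List.ofFn v) := by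
  have hhead : ∀ v : Fin n → Bool, σ (b :: List.ofFn v) = c :: (σ (b :: List.ofFn v)).tail := by
    intro v
    obtain ⟨t', ht, h⟩ := taut_append hσ [b] (List.ofFn v)
    have : σ (b :: List.ofFn v) = c :: t' := by
      rw [show b :: List.ofFn v = [b] ++ List.ofFn v from rfl, h, hb]; rfl
    rw [this]; rfl
  have hlen : ∀ v : Fin n → Bool, (σ (b :: List.ofFn v)).tail.length = n := by
    intro v
    have := taut_length hσ (b :: List.ofFn v)
    simp only [List.length_cons, List.length_ofFn] at this
    simp [List.length_tail, this]
  set F : (Fin n → Bool) → (Fin n → Bool) :=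
    fun v i => (σ (b :: List.ofFn v)).tail.getD i false with hFdef
  have hF : ∀ v, List.ofFn (F v) = (σ (b :: List.ofFn v)).tail := fun v => ofFn_getD (hlen v)
  have hinj : Function.Injective F := by
    intro v w h
    have h2 : σ (b :: List.ofFn v) = σ (b :: List.ofFn w) := by
      rw [hhead v, hhead w, ← hF, ← hF, h]
    have := σ.injective h2
    exact list_ofFn_inj (by injection this)
  have hbij := Finite.injective_iff_bijective.mp hinj
  calc ∑ v : Fin n → Bool, f (σ (b :: List.ofFn v))
      = ∑ v : Fin n → Bool, (fun w => f (c :: List.ofFn w)) (F v) := by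
        refine Finset.sum_congr rfl fun v _ => ?_
        show f (σ (b :: List.ofFn v)) = f (c :: List.ofFn (F v))
        rw [hF, ← hhead v]
    _ = ∑ v : Fin n → Bool, f (c :: List.ofFn v) := hbij.sum_comp fun w => f (c :: List.ofFn w)

lemma zmod2_helper : ∀ a b c d : ZMod 2, a + b = c + d → a = c + d + b := by decide

lemma zmod2_addself : ∀ a : ZMod 2, a + a = 0 := by decide

lemma zmod2_aba : ∀ a b : ZMod 2, a + b + a = b := by decide

lemma phiLevel_mul {π ρ : Equiv.Perm (List Bool)} (hπ : IsTreeAut π) (hρ : IsTreeAut ρ)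
    (n : ℕ) : phiLevel (n + 1) (π * ρ) = phiLevel (n + 1) π + phiLevel (n + 1) ρ := by
  show (∑ v : Fin n → Bool, swapBit (π * ρ) (List.ofFn v)) = _
  have : ∀ v : Fin n → Bool, swapBit (π * ρ) (List.ofFn v)
      = swapBit π (ρ (List.ofFn v)) + swapBit ρ (List.ofFn v) :=
    fun v => swapBit_mul hπ hρ _
  rw [Finset.sum_congr rfl fun v _ => this v, Finset.sum_add_distrib]
  congr 1
  exact sum_comp_aut hρ n (swapBit π)

lemma comm_identity {σ τ : Equiv.Perm (List Bool)} (hσ : IsTreeAut σ) (hτ : IsTreeAut τ)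
    (hc : σ * τ = τ * σ) (w : List Bool) :
    swapBit τ (σ w) = swapBit σ (τ w) + swapBit τ w + swapBit σ w := by
  have h1 := swapBit_mul hτ hσ w
  have h2 := swapBit_mul hσ hτ w
  rw [← hc] at h1
  have h3 := h2.symm.trans h1
  exact zmod2_helper _ _ _ _ h3.symm

lemma swapBit_root_vals {σ : Equiv.Perm (List Bool)} (hσ : IsTreeAut σ) :
    (swapBit σ [] = 0 ∧ σ [false] = [false] ∧ σ [true] = [true]) ∨
    (swapBit σ [] = 1 ∧ σ [false] = [true] ∧ σ [true] = [false]) := by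
  have := taut_children hσ []
  rw [hσ.1] at this
  simpa using this

lemma phi_comm_zero {σ τ : Equiv.Perm (List Bool)} (hσ : IsTreeAut σ) (hτ : IsTreeAut τ)
    (hc : σ * τ = τ * σ) (hs : swapBit σ [] = 1) (ht : swapBit τ [] = 0) (n : ℕ) :
    phiLevel (n + 1) τ = 0 := by
  obtain ⟨hσf, hσt⟩ := (swapBit_root_vals hσ).resolve_left (by simp [hs]) |>.2
  obtain ⟨hτf, hτt⟩ := (swapBit_root_vals hτ).resolve_right (by simp [ht]) |>.2
  cases n with
  | zero =>
    show (∑ v : Fin 0 → Bool, swapBit τ (List.ofFn v)) = 0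
    have h := Fintype.sum_unique (fun v : Fin 0 → Bool => swapBit τ (List.ofFn v))
    rw [h]
    simpa using ht
  | succ n =>
    show (∑ v : Fin (n + 1) → Bool, swapBit τ (List.ofFn v)) = 0
    -- split by head bit
    have hsplit : (∑ v : Fin (n + 1) → Bool, swapBit τ (List.ofFn v))
        = (∑ v : Fin n → Bool, swapBit τ (true :: List.ofFn v))
          + (∑ v : Fin n → Bool, swapBit τ (false :: List.ofFn v)) := by
      have h := Equiv.sum_comp (Fin.consEquiv (fun _ : Fin (n+1) => Bool))
        (fun v => swapBit τ (List.ofFn v))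
      rw [← h, Fintype.sum_prod_type, Fintype.sum_bool]
      congr 1 <;> exact Finset.sum_congr rfl fun v _ => by
        congr 1
        simp [Fin.consEquiv, List.ofFn_succ]
    rw [hsplit]
    set Sf := ∑ v : Fin n → Bool, swapBit τ (false :: List.ofFn v) with hSf
    set St := ∑ v : Fin n → Bool, swapBit τ (true :: List.ofFn v) with hSt
    have key : St = Sf := by
      have e1 : (∑ v : Fin n → Bool, swapBit τ (σ (false :: List.ofFn v))) = St :=
        sum_comp_head hσ n hσf (swapBit τ)
      have e2 : (∑ v : Fin n → Bool, swapBit σ (τ (false :: List.ofFn v)))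
          = ∑ v : Fin n → Bool, swapBit σ (false :: List.ofFn v) :=
        sum_comp_head hτ n hτf (swapBit σ)
      have e3 : (∑ v : Fin n → Bool, swapBit τ (σ (false :: List.ofFn v)))
          = ((∑ v : Fin n → Bool, swapBit σ (τ (false :: List.ofFn v))) + Sf)
            + ∑ v : Fin n → Bool, swapBit σ (false :: List.ofFn v) := by
        rw [← Finset.sum_add_distrib, ← Finset.sum_add_distrib]
        exact Finset.sum_congr rfl fun v _ => comm_identity hσ hτ hc _
      rw [e1, e2] at e3
      rw [e3]
      exact zmod2_aba _ _
    rw [key]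
    exact zmod2_addself _

lemma phiLevel_one (σ : Equiv.Perm (List Bool)) : phiLevel 1 σ = swapBit σ [] := by
  show (∑ v : Fin 0 → Bool, swapBit σ (List.ofFn v)) = _
  have h := Fintype.sum_unique (fun v : Fin 0 → Bool => swapBit σ (List.ofFn v))
  rw [h]
  congr 1

lemma swapBit_zero_or_one (σ : Equiv.Perm (List Bool)) (v : List Bool) :
    swapBit σ v = 0 ∨ swapBit σ v = 1 := by
  unfold swapBit; split <;> simp

/-- If `G` is an abelian subgroup of the automorphism group of the infinite rooted binary
tree containing an element `σ` with `φ_1(σ) = 1`, then `ψ(G) ⊆ 𝔽₂ · ψ(σ)`; in particular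
`ψ(G)` is an `𝔽₂`-subspace of dimension at most `1`. -/
theorem psi_image_one_dimensional (G : Subgroup (Equiv.Perm (List Bool)))
    (hG : ∀ g ∈ G, IsTreeAut g) (hab : ∀ g ∈ G, ∀ h ∈ G, g * h = h * g)
    (σ : Equiv.Perm (List Bool)) (hσG : σ ∈ G) (h1 : phiLevel 1 σ = 1) :
    ∀ τ ∈ G, ∃ a : ZMod 2, psiMap τ = a • psiMap σ := by
  intro τ hτG
  have hσ := hG σ hσG
  have hτ := hG τ hτG
  have hs1 : swapBit σ [] = 1 := by rw [← phiLevel_one]; exact h1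
  rcases swapBit_zero_or_one τ [] with ht | ht
  · refine ⟨0, ?_⟩
    funext n
    have := phi_comm_zero hσ hτ (hab σ hσG τ hτG) hs1 ht n
    simp [psiMap, this]
  · refine ⟨1, ?_⟩
    have hρG : τ * σ ∈ G := mul_mem hτG hσG
    have hρ := hG _ hρG
    have hρ0 : swapBit (τ * σ) [] = 0 := by
      rw [swapBit_mul hτ hσ, hσ.1, ht, hs1]
      decide
    have hcomm : σ * (τ * σ) = (τ * σ) * σ := by
      rw [← mul_assoc, hab σ hσG τ hτG]
    have h0 := phi_comm_zero hσ hρ hcomm hs1 hρ0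
    funext n
    have hhom := phiLevel_mul hτ hσ n
    rw [h0 n] at hhom
    have : phiLevel (n + 1) τ = phiLevel (n + 1) σ := by
      rcases swapBit_zero_or_one τ [] with _ | _ <;>
      · revert hhom
        generalize phiLevel (n + 1) τ = a
        generalize phiLevel (n + 1) σ = b
        revert a b
        decide
    simpa [psiMap] using this
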